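/- Let α be a real symmetric positive definite 2s×2s matrix. Then there exists a complex structure J on (ℝ^{2s}, Δ) that commutes with the operator A = Δ⁻¹α, i.e., J satisfies J² = −I, ΔJ = −JᵀΔ, ΔJ is positive semidefinite, and J(Δ⁻¹α) = (Δ⁻¹α)J. (Such a J is given by the orthogonal factor of the polar decomposition of A in the Euclidean space with inner product α.) -/

import Mathlib

/-!
Write `α = β²` with `β = √α`. Then `Δ⁻¹α = β⁻¹ S β` for the invertible antisymmetric matrix
`S = β Δ⁻¹ β`. Being normal, `S` commutes with `|S| = √(SᵀS)`, so its polar part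
`K = S |S|⁻¹` commutes with `S` and satisfies `K² = S² |S|⁻² = -1`; moreover `S⁻¹K = |S|⁻¹ ≥ 0`,
so `K` is a complex structure for the form `S⁻¹`. The congruence `Δ = β S⁻¹ β` carries it to
the complex structure `J = β⁻¹ K β` for `Δ`, which commutes with `β⁻¹ S β = Δ⁻¹α`.
-/

open Matrix

/-- The standard symplectic matrix `Δ` of a system of `s` modes: block-diagonal
with `s` copies of the 2×2 block `[[0,1],[-1,0]]`. -/
noncomputable def Sympl (s : ℕ) : Matrix (Fin 2 × Fin s) (Fin 2 × Fin s) ℝ :=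
  Matrix.blockDiagonal (fun _ => !![0, 1; -1, 0])

def IsComplexStructure {s : ℕ} (J : Matrix (Fin 2 × Fin s) (Fin 2 × Fin s) ℝ) : Prop :=
  J * J = -1 ∧ Sympl s * J = -(Jᵀ * Sympl s) ∧ (Sympl s * J).PosSemidef

open scoped MatrixOrder

namespace Matrix

variable {n : Type*} [Fintype n]

lemma isStarNormal_of_transpose_eq_neg {S : Matrix n n ℝ} (hS : Sᵀ = -S) : IsStarNormal S :=
  ⟨by rw [star_eq_conjTranspose, conjTranspose_eq_transpose_of_trivial, hS]
      exact (Commute.refl S).neg_left⟩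

variable [DecidableEq n]

lemma abs_mul_abs_of_transpose_eq_neg {S : Matrix n n ℝ} (hS : Sᵀ = -S) :
    CFC.abs S * CFC.abs S = -(S * S) := by
  rw [CFC.abs_mul_abs, star_eq_conjTranspose, conjTranspose_eq_transpose_of_trivial, hS,
    Matrix.neg_mul]

def IsComplexStructureFor (Ω J : Matrix n n ℝ) : Prop :=
  J * J = -1 ∧ Ω * J = -(Jᵀ * Ω) ∧ (Ω * J).PosSemidef

lemma isComplexStructureFor_of_transpose_eq_neg {Ω J : Matrix n n ℝ} (hΩ : Ωᵀ = -Ω)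
    (hJ : J * J = -1) (hΩJ : (Ω * J).PosSemidef) : IsComplexStructureFor Ω J := by
  refine ⟨hJ, ?_, hΩJ⟩
  have hsymm : (Ω * J)ᵀ = Ω * J := by
    rw [← conjTranspose_eq_transpose_of_trivial]
    exact hΩJ.isHermitian
  rw [← hsymm, transpose_mul, hΩ, Matrix.mul_neg]

lemma conj_mul_conj {L : Matrix n n ℝ} (hL : IsUnit L) (X Y : Matrix n n ℝ) :
    L⁻¹ * X * L * (L⁻¹ * Y * L) = L⁻¹ * (X * Y) * L := by
  simp only [Matrix.mul_assoc, mul_nonsing_inv_cancel_left _ _ ((isUnit_iff_isUnit_det L).mp hL)]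

lemma transpose_mul_mul_mul_conj {L : Matrix n n ℝ} (hL : IsUnit L) (X Y : Matrix n n ℝ) :
    Lᵀ * X * L * (L⁻¹ * Y * L) = Lᵀ * (X * Y) * L := by
  simp only [Matrix.mul_assoc, mul_nonsing_inv_cancel_left _ _ ((isUnit_iff_isUnit_det L).mp hL)]

lemma transpose_conj_mul_transpose_mul_mul {L : Matrix n n ℝ} (hL : IsUnit L)
    (X Y : Matrix n n ℝ) : (L⁻¹ * X * L)ᵀ * (Lᵀ * Y * L) = Lᵀ * (Xᵀ * Y) * L := by
  have hcancel : L⁻¹ᵀ * Lᵀ = 1 := by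
    rw [← transpose_mul, mul_nonsing_inv _ ((isUnit_iff_isUnit_det L).mp hL), transpose_one]
  simp only [transpose_mul, Matrix.mul_assoc]
  rw [← Matrix.mul_assoc L⁻¹ᵀ, hcancel, Matrix.one_mul]

theorem IsComplexStructureFor.congr {Ω J L : Matrix n n ℝ} (hJ : IsComplexStructureFor Ω J)
    (hL : IsUnit L) : IsComplexStructureFor (Lᵀ * Ω * L) (L⁻¹ * J * L) := by
  obtain ⟨hJJ, hΩJ, hpsd⟩ := hJ
  refine ⟨?_, ?_, ?_⟩
  · rw [conj_mul_conj hL, hJJ, Matrix.mul_neg, Matrix.mul_one, Matrix.neg_mul,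
      nonsing_inv_mul _ ((isUnit_iff_isUnit_det L).mp hL)]
  · rw [transpose_mul_mul_mul_conj hL, transpose_conj_mul_transpose_mul_mul hL, hΩJ,
      Matrix.mul_neg, Matrix.neg_mul]
  · rw [transpose_mul_mul_mul_conj hL, ← conjTranspose_eq_transpose_of_trivial]
    exact hpsd.conjTranspose_mul_mul_same L

theorem isComplexStructureFor_inv_mul_abs_inv {S : Matrix n n ℝ} (hS : Sᵀ = -S)
    (hSu : IsUnit S) :
    IsComplexStructureFor S⁻¹ (S * (CFC.abs S)⁻¹) ∧ Commute (S * (CFC.abs S)⁻¹) S := by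
  have hSdet := (isUnit_iff_isUnit_det S).mp hSu
  have hQS : Commute (CFC.abs S) S := CFC.commute_abs_self S (isStarNormal_of_transpose_eq_neg hS)
  have hQQ := abs_mul_abs_of_transpose_eq_neg hS
  have hQu : IsUnit (CFC.abs S) := isUnit_of_mul_isUnit_left (hQQ ▸ (hSu.mul hSu).neg)
  have hQinvS : Commute (CFC.abs S)⁻¹ S := by
    rw [← hQu.unit_spec, ← coe_units_inv]
    exact hQS.units_inv_left
  refine ⟨isComplexStructureFor_of_transpose_eq_neg ?_ ?_ ?_, (Commute.refl S).mul_left hQinvS⟩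
  · rw [transpose_nonsing_inv, hS]
    exact inv_eq_right_inv (by rw [neg_mul_neg, mul_nonsing_inv _ hSdet])
  · calc S * (CFC.abs S)⁻¹ * (S * (CFC.abs S)⁻¹)
        = S * S * ((CFC.abs S)⁻¹ * (CFC.abs S)⁻¹) := by
          rw [Matrix.mul_assoc, ← Matrix.mul_assoc _ S, hQinvS.eq]
          simp only [Matrix.mul_assoc]
      _ = -1 := by
          rw [← Matrix.mul_inv_rev, ← neg_neg (S * S), ← hQQ, Matrix.neg_mul,
            mul_nonsing_inv _ ((isUnit_iff_isUnit_det _).mp (hQu.mul hQu))]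
  · rw [nonsing_inv_mul_cancel_left _ _ hSdet]
    exact (nonneg_iff_posSemidef.mp (CFC.abs_nonneg S)).inv

end Matrix

lemma sympl_transpose (s : ℕ) : (Sympl s)ᵀ = -Sympl s := by
  rw [Sympl, blockDiagonal_transpose, ← blockDiagonal_neg]
  congr 1
  ext _ i j
  fin_cases i <;> fin_cases j <;> simp

lemma sympl_mul_self (s : ℕ) : Sympl s * Sympl s = -1 := by
  rw [Sympl, ← blockDiagonal_mul, ← blockDiagonal_one, ← blockDiagonal_neg]
  congr 1
  ext _ i j
  fin_cases i <;> fin_cases j <;> simp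

lemma inv_sympl (s : ℕ) : (Sympl s)⁻¹ = -Sympl s :=
  inv_eq_right_inv (by rw [Matrix.mul_neg, sympl_mul_self, neg_neg])

lemma isUnit_sympl (s : ℕ) : IsUnit (Sympl s) :=
  IsUnit.of_mul_eq_one _ (by rw [Matrix.mul_neg, sympl_mul_self, neg_neg])

/-- For every real symmetric positive definite matrix `α` there exists
a complex structure `J` on `(ℝ^{2s}, Δ)` commuting with `A = Δ⁻¹α`. -/
theorem exists_complexStructure_commuting (s : ℕ)
    (α : Matrix (Fin 2 × Fin s) (Fin 2 × Fin s) ℝ) (hα : α.PosDef) :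
    ∃ J : Matrix (Fin 2 × Fin s) (Fin 2 × Fin s) ℝ, IsComplexStructure J ∧
      J * ((Sympl s)⁻¹ * α) = ((Sympl s)⁻¹ * α) * J := by
  have hα0 : 0 ≤ α := nonneg_iff_posSemidef.mpr hα.posSemidef
  set β := CFC.sqrt α
  have hβT : βᵀ = β := by
    rw [← conjTranspose_eq_transpose_of_trivial]
    exact (nonneg_iff_posSemidef.mp (CFC.sqrt_nonneg α)).isHermitian
  have hβu : IsUnit β := (CFC.isUnit_sqrt_iff α hα0).mpr hα.isUnit
  have hβdet := (isUnit_iff_isUnit_det β).mp hβu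
  set S := β * (Sympl s)⁻¹ * β
  have hST : Sᵀ = -S := by
    simp only [S, transpose_mul, hβT, inv_sympl, transpose_neg, sympl_transpose,
      Matrix.mul_neg, Matrix.neg_mul, neg_neg, Matrix.mul_assoc]
  have hSu : IsUnit S := (hβu.mul (isUnit_nonsing_inv_iff.mpr (isUnit_sympl s))).mul hβu
  obtain ⟨hK, hKS⟩ := isComplexStructureFor_inv_mul_abs_inv hST hSu
  have hΔ : βᵀ * S⁻¹ * β = Sympl s := by
    rw [Matrix.mul_inv_rev, Matrix.mul_inv_rev,
      nonsing_inv_nonsing_inv _ ((isUnit_iff_isUnit_det _).mp (isUnit_sympl s)), hβT]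
    simp only [Matrix.mul_assoc, mul_nonsing_inv_cancel_left _ _ hβdet, nonsing_inv_mul _ hβdet,
      Matrix.mul_one]
  have hA : (Sympl s)⁻¹ * α = β⁻¹ * S * β := by
    simp only [S, Matrix.mul_assoc, nonsing_inv_mul_cancel_left _ _ hβdet]
    rw [CFC.sqrt_mul_sqrt_self α hα0]
  have hJ : IsComplexStructureFor (Sympl s) (β⁻¹ * (S * (CFC.abs S)⁻¹) * β) := hΔ ▸ hK.congr hβu
  refine ⟨_, hJ, ?_⟩
  rw [hA, conj_mul_conj hβu, conj_mul_conj hβu, hKS.eq]
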